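/- Let F and G be propositional clausal formulas with no common clause such that F ∧ G is unsatisfiable, and let M₀ be the root of a deduction tree for F ∧ G. Then Huang's partial interpolant pi(M₀) associated with M₀ is a Craig interpolant of F and ¬G, i.e., F ⊨ pi(M₀) ⊨ ¬G and every atom of pi(M₀) occurs in both F and G. -/

import Mathlib

open Classical

namespace CTIFProp

/-- A propositional literal: polarity and atom (atoms are nullary predicates). -/
abbrev PLit := Bool × ℕ

/-- A propositional clause: a disjunction of literals (as a list). -/
abbrev PClause := List PLit

/-- A propositional clausal formula: a conjunction of clauses. -/
abbrev PCF := List PClause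

def PLit.compl (L : PLit) : PLit := (!L.1, L.2)

/-- Propositional formulas. -/
inductive PFml : Type where
  | tru : PFml
  | fls : PFml
  | atom : ℕ → PFml
  | neg : PFml → PFml
  | conj : PFml → PFml → PFml
  | disj : PFml → PFml → PFml
  deriving DecidableEq

def PLit.toFml (L : PLit) : PFml := if L.1 then .atom L.2 else .neg (.atom L.2)

def PFml.sat (v : ℕ → Prop) : PFml → Prop
  | .tru => True
  | .fls => False
  | .atom a => v a
  | .neg F => ¬ F.sat v
  | .conj F G => F.sat v ∧ G.sat v
  | .disj F G => F.sat v ∨ G.sat v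

def PFml.atoms : PFml → Set ℕ
  | .tru => ∅
  | .fls => ∅
  | .atom a => {a}
  | .neg F => F.atoms
  | .conj F G => F.atoms ∪ G.atoms
  | .disj F G => F.atoms ∪ G.atoms

def PLit.sat (v : ℕ → Prop) (L : PLit) : Prop := if L.1 then v L.2 else ¬ v L.2

def PClause.sat (v : ℕ → Prop) (C : PClause) : Prop := ∃ L ∈ C, PLit.sat v L

def PCF.sat (v : ℕ → Prop) (F : PCF) : Prop := ∀ C ∈ F, PClause.sat v C

/-- The atom `A` occurs in the clausal formula `F`. -/
def occB (A : ℕ) (F : PCF) : Bool := F.any (fun C => C.any (fun L => L.2 == A))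

/-- `A` is F-colored w.r.t. `F`, `G`: it occurs in `F` but not in `G`. -/
def fColored (A : ℕ) (F G : PCF) : Bool := occB A F && !occB A G

def bigDisj : List PFml → PFml
  | [] => .fls
  | [H] => H
  | H :: Hs => .disj H (bigDisj Hs)

def bigConj : List PFml → PFml
  | [] => .tru
  | [H] => H
  | H :: Hs => .conj H (bigConj Hs)

/-- Resolution deduction trees: leaves hold input clauses, inner nodes resolve
their children's clauses upon an atom. -/
inductive DT : Type where
  | leaf : PClause → DT
  | res : ℕ → DT → DT → DT

/-- The clause labeling a deduction-tree node; for a resolution step upon `A`,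
the binary resolvent with merging of duplicate literals. -/
def DT.clause : DT → PClause
  | .leaf C => C
  | .res A t₁ t₂ =>
      ((t₁.clause.filter (fun L => L ≠ (true, A))) ++
       (t₂.clause.filter (fun L => L ≠ (false, A)))).dedup

/-- Well-formedness of a deduction tree for the clausal formula `FG`: every leaf
clause is in `FG` and every resolution step resolves upon `A` occurring positively
in the first and negatively in the second child's clause. -/
def DT.wf (FG : PCF) : DT → Prop
  | .leaf C => C ∈ FG
  | .res A t₁ t₂ => (true, A) ∈ t₁.clause ∧ (false, A) ∈ t₂.clause ∧ t₁.wf FG ∧ t₂.wf FG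

/-- Huang's partial interpolant associated with the nodes of a deduction tree
for F ∧ G. -/
def DT.pi (F G : PCF) : DT → PFml
  | .leaf C => if C ∈ F then .fls else .tru
  | .res A t₁ t₂ =>
      if fColored A F G then .disj (t₁.pi F G) (t₂.pi F G)
      else if fColored A G F then .conj (t₁.pi F G) (t₂.pi F G)
      else .disj (.conj (t₁.pi F G) (.neg (.atom A))) (.conj (.atom A) (t₂.pi F G))

/-- McMillan's partial interpolant associated with the nodes of a deduction tree
for F ∧ G. -/
def DT.mm (F G : PCF) : DT → PFml
  | .leaf C =>
      if C ∈ F then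
        bigDisj ((C.filter (fun L => occB L.2 F && occB L.2 G)).map PLit.toFml)
      else .tru
  | .res A t₁ t₂ =>
      if fColored A F G then .disj (t₁.mm F G) (t₂.mm F G)
      else .conj (t₁.mm F G) (t₂.mm F G)

def DT.size : DT → ℕ
  | .leaf _ => 1
  | .res _ t₁ t₂ => t₁.size + t₂.size + 1

def DT.innerCount : DT → ℕ
  | .leaf _ => 0
  | .res _ t₁ t₂ => t₁.innerCount + t₂.innerCount + 1

/-- The non-root part of a two-sided (propositional) clausal tableau. -/
inductive PTab : Type where
  | node : PLit → Bool → List PTab → PTab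

def PTab.lit : PTab → PLit
  | .node L _ _ => L

def PTab.side : PTab → Bool
  | .node _ s _ => s

/-- Well-formedness of a subtree of a two-sided clausal tableau for the propositional
clausal formulas `F` and `G`: siblings share their side; the clause formed by the
children's literals is a clause of `F` (side true) resp. `G` (side false). -/
inductive PTab.isFor (F G : PCF) : PTab → Prop where
  | mk : ∀ (L : PLit) (s : Bool) (cs : List PTab) (s' : Bool),
      (∀ t ∈ cs, PTab.side t = s') →
      (cs ≠ [] → (cs.map PTab.lit) ∈ (if s' then F else G)) →
      (∀ t ∈ cs, PTab.isFor F G t) →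
      PTab.isFor F G (.node L s cs)

/-- All leaves of the subtree are closing. -/
inductive PTab.leafClosed : List PLit → PTab → Prop where
  | leaf : ∀ (anc : List PLit) (L : PLit) (s : Bool),
      PLit.compl L ∈ anc → PTab.leafClosed anc (.node L s [])
  | inner : ∀ (anc : List PLit) (L : PLit) (s : Bool) (cs : List PTab),
      cs ≠ [] → (∀ t ∈ cs, PTab.leafClosed (L :: anc) t) →
      PTab.leafClosed anc (.node L s cs)

/-- The function ipol on two-sided leaf-closed clausal tableaux, as a relation
(a closing leaf may have several possible targets). -/
inductive Ipol : List (PLit × Bool) → PTab → PFml → Prop where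
  | leafFF : ∀ (anc : List (PLit × Bool)) (L : PLit),
      (PLit.compl L, true) ∈ anc → Ipol anc (.node L true []) .fls
  | leafFG : ∀ (anc : List (PLit × Bool)) (L : PLit),
      (PLit.compl L, false) ∈ anc → Ipol anc (.node L true []) (PLit.toFml L)
  | leafGF : ∀ (anc : List (PLit × Bool)) (L : PLit),
      (PLit.compl L, true) ∈ anc → Ipol anc (.node L false []) (PLit.toFml (PLit.compl L))
  | leafGG : ∀ (anc : List (PLit × Bool)) (L : PLit),
      (PLit.compl L, false) ∈ anc → Ipol anc (.node L false []) .tru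
  | innerF : ∀ (anc : List (PLit × Bool)) (L : PLit) (s : Bool) (cs : List PTab) (Hs : List PFml),
      cs ≠ [] → (∀ t ∈ cs, PTab.side t = true) →
      ∀ (hlen : cs.length = Hs.length),
      (∀ i : Fin cs.length, Ipol ((L, s) :: anc) (cs.get i) (Hs.get (Fin.cast hlen i))) →
      Ipol anc (.node L s cs) (bigDisj Hs)
  | innerG : ∀ (anc : List (PLit × Bool)) (L : PLit) (s : Bool) (cs : List PTab) (Hs : List PFml),
      cs ≠ [] → (∀ t ∈ cs, PTab.side t = false) →
      ∀ (hlen : cs.length = Hs.length),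
      (∀ i : Fin cs.length, Ipol ((L, s) :: anc) (cs.get i) (Hs.get (Fin.cast hlen i))) →
      Ipol anc (.node L s cs) (bigConj Hs)

/-- The value of ipol at the (unlabeled) root. -/
inductive IpolRoot : List PTab → PFml → Prop where
  | rootF : ∀ (cs : List PTab) (Hs : List PFml),
      cs ≠ [] → (∀ t ∈ cs, PTab.side t = true) →
      ∀ (hlen : cs.length = Hs.length),
      (∀ i : Fin cs.length, Ipol [] (cs.get i) (Hs.get (Fin.cast hlen i))) →
      IpolRoot cs (bigDisj Hs)
  | rootG : ∀ (cs : List PTab) (Hs : List PFml),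
      cs ≠ [] → (∀ t ∈ cs, PTab.side t = false) →
      ∀ (hlen : cs.length = Hs.length),
      (∀ i : Fin cs.length, Ipol [] (cs.get i) (Hs.get (Fin.cast hlen i))) →
      IpolRoot cs (bigConj Hs)

/-- A two-sided clausal tableau, given by the children of the (unlabeled) root. -/
structure PTableau : Type where
  children : List PTab

def PTableau.isFor (F G : PCF) (T : PTableau) : Prop :=
  (∃ s' : Bool, (∀ t ∈ T.children, PTab.side t = s') ∧
    (T.children ≠ [] → (T.children.map PTab.lit) ∈ (if s' then F else G))) ∧
  ∀ t ∈ T.children, PTab.isFor F G t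

def PTableau.leafClosed (T : PTableau) : Prop :=
  T.children ≠ [] ∧ ∀ t ∈ T.children, PTab.leafClosed [] t

mutual
  def PTab.size : PTab → ℕ
    | .node _ _ cs => 1 + PTab.sizeList cs
  def PTab.sizeList : List PTab → ℕ
    | [] => 0
    | t :: ts => PTab.size t + PTab.sizeList ts
end

def PTableau.size (T : PTableau) : ℕ := 1 + PTab.sizeList T.children

/-- The clausal formula CUTS_F: the clauses ¬A ∨ A for all atoms A occurring in F. -/
def cuts (F : PCF) : PCF :=
  ((F.flatMap (fun C => C.map Prod.snd)).dedup).map (fun A => [(false, A), (true, A)])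

/-- `C` is an atomic-cut clause ¬A ∨ A. -/
def isCutClause : PClause → Bool
  | [(b₁, A₁), (b₂, A₂)] => !b₁ && b₂ && (A₁ == A₂)
  | _ => false

mutual
  /-- Number of tableau clauses (children groups) that are atomic cuts. -/
  def PTab.cutCount : PTab → ℕ
    | .node _ _ cs =>
        (if isCutClause (cs.map PTab.lit) then 1 else 0) + PTab.cutCountList cs
  def PTab.cutCountList : List PTab → ℕ
    | [] => 0
    | t :: ts => PTab.cutCount t + PTab.cutCountList ts
end

def PTableau.cutCount (T : PTableau) : ℕ :=
  (if isCutClause (T.children.map PTab.lit) then 1 else 0) + PTab.cutCountList T.children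

/-- Every atomic-cut clause of the subtree whose atom is F-colored has side F and
every atomic-cut clause upon a G-colored or transparent atom has side G. -/
inductive PTab.cutSidesOk (F G : PCF) : PTab → Prop where
  | mk : ∀ (L : PLit) (s : Bool) (cs : List PTab),
      (∀ A : ℕ, cs.map PTab.lit = [(false, A), (true, A)] →
        ∀ t ∈ cs, PTab.side t = fColored A F G) →
      (∀ t ∈ cs, PTab.cutSidesOk F G t) →
      PTab.cutSidesOk F G (.node L s cs)

def PTableau.cutSidesOk (F G : PCF) (T : PTableau) : Prop :=
  (∀ A : ℕ, T.children.map PTab.lit = [(false, A), (true, A)] →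
    ∀ t ∈ T.children, PTab.side t = fColored A F G) ∧
  ∀ t ∈ T.children, PTab.cutSidesOk F G t

end CTIFProp
namespace CTIFProp

/-! Huang's invariant, proved by induction over the deduction tree: a node with clause `C`
satisfies `F ⊨ pi ∨ C|F` and `G ⊨ ¬pi ∨ C|G`, where `C|S` keeps the literals of `C` whose
atom occurs in `S`. At the root `C` is empty, which gives `F ⊨ pi ⊨ ¬G`. -/

def PClause.restrict (C : PClause) (S : PCF) : PClause := C.filter fun L => occB L.2 S

lemma occB_iff {A : ℕ} {F : PCF} : occB A F = true ↔ ∃ C ∈ F, ∃ L ∈ C, L.2 = A := by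
  simp [occB, List.any_eq_true]

lemma fColored_eq_true_iff {A : ℕ} {F G : PCF} :
    fColored A F G = true ↔ occB A F = true ∧ occB A G = false := by
  simp [fColored]

lemma occB_left_and_right_of_not_fColored {A : ℕ} {F G : PCF}
    (hA : occB A (F ++ G) = true) (hF : fColored A F G ≠ true) (hG : fColored A G F ≠ true) :
    occB A F = true ∧ occB A G = true := by
  rw [occB, List.any_append, ← occB, ← occB] at hA
  cases hAF : occB A F <;> cases hAG : occB A G <;> simp_all [fColored]

lemma PClause.sat_restrict_of_mem {v : ℕ → Prop} {C : PClause} {S : PCF}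
    (hC : C ∈ S) (hv : PCF.sat v S) : (C.restrict S).sat v := by
  obtain ⟨L, hL, hLv⟩ := hv C hC
  exact ⟨L, List.mem_filter.mpr ⟨hL, occB_iff.mpr ⟨C, hC, L, hL, rfl⟩⟩, hLv⟩

namespace DT

lemma mem_clause_res {L : PLit} {A : ℕ} {t₁ t₂ : DT} :
    L ∈ (res A t₁ t₂).clause ↔
      (L ∈ t₁.clause ∧ L ≠ (true, A)) ∨ (L ∈ t₂.clause ∧ L ≠ (false, A)) := by
  simp [DT.clause, List.mem_dedup, List.mem_filter]

lemma occB_of_mem_clause {FG : PCF} {t : DT} (ht : t.wf FG) {L : PLit} (hL : L ∈ t.clause) :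
    occB L.2 FG = true := by
  induction t with
  | leaf C => exact occB_iff.mpr ⟨C, ht, L, hL, rfl⟩
  | res A t₁ t₂ ih₁ ih₂ =>
    rcases mem_clause_res.mp hL with ⟨hL, -⟩ | ⟨hL, -⟩
    · exact ih₁ ht.2.2.1 hL
    · exact ih₂ ht.2.2.2 hL

lemma sat_pi_res {F G : PCF} {v : ℕ → Prop} {A : ℕ} {t₁ t₂ : DT} :
    ((res A t₁ t₂).pi F G).sat v ↔
      if fColored A F G then (t₁.pi F G).sat v ∨ (t₂.pi F G).sat v
      else if fColored A G F then (t₁.pi F G).sat v ∧ (t₂.pi F G).sat v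
      else ((t₁.pi F G).sat v ∧ ¬ v A) ∨ (v A ∧ (t₂.pi F G).sat v) := by
  rw [DT.pi]
  split_ifs <;> rfl

section Resolution

variable {S : PCF} {v : ℕ → Prop} {A : ℕ} {t₁ t₂ : DT}

-- The clashing literal `A` of `t₁` only survives restriction to `S` when `A` occurs in `S`.
lemma sat_restrict_res_of_left (h : (t₁.clause.restrict S).sat v) (hA : v A → occB A S = false) :
    ((res A t₁ t₂).clause.restrict S).sat v := by
  obtain ⟨L, hL, hLv⟩ := h
  rw [PClause.restrict, List.mem_filter] at hL
  refine ⟨L, List.mem_filter.mpr ⟨mem_clause_res.mpr (.inl ⟨hL.1, ?_⟩), hL.2⟩, hLv⟩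
  rintro rfl
  simp_all [PLit.sat]

lemma sat_restrict_res_of_right (h : (t₂.clause.restrict S).sat v) (hA : ¬ v A → occB A S = false) :
    ((res A t₁ t₂).clause.restrict S).sat v := by
  obtain ⟨L, hL, hLv⟩ := h
  rw [PClause.restrict, List.mem_filter] at hL
  refine ⟨L, List.mem_filter.mpr ⟨mem_clause_res.mpr (.inr ⟨hL.1, ?_⟩), hL.2⟩, hLv⟩
  rintro rfl
  simp_all [PLit.sat]

lemma sat_restrict_res_or_of_cases {P₁ P₂ : Prop}
    (h₁ : P₁ ∨ (t₁.clause.restrict S).sat v) (h₂ : P₂ ∨ (t₂.clause.restrict S).sat v) :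
    ((P₁ ∧ ¬ v A) ∨ (v A ∧ P₂)) ∨ ((res A t₁ t₂).clause.restrict S).sat v := by
  by_cases hA : v A
  · rcases h₂ with h | h
    · exact .inl (.inr ⟨hA, h⟩)
    · exact .inr (sat_restrict_res_of_right h (absurd hA))
  · rcases h₁ with h | h
    · exact .inl (.inl ⟨h, hA⟩)
    · exact .inr (sat_restrict_res_of_left h (absurd · hA))

lemma sat_restrict_res_or_of_not_occB {P₁ P₂ : Prop} (hA : occB A S = false)
    (h₁ : P₁ ∨ (t₁.clause.restrict S).sat v) (h₂ : P₂ ∨ (t₂.clause.restrict S).sat v) :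
    (P₁ ∧ P₂) ∨ ((res A t₁ t₂).clause.restrict S).sat v := by
  rcases h₁ with h₁ | h₁
  · rcases h₂ with h₂ | h₂
    · exact .inl ⟨h₁, h₂⟩
    · exact .inr (sat_restrict_res_of_right h₂ fun _ => hA)
  · exact .inr (sat_restrict_res_of_left h₁ fun _ => hA)

end Resolution

variable {F G : PCF}

lemma sat_pi_or_sat_restrict_left {v : ℕ → Prop} (hv : PCF.sat v F) (t : DT) :
    (t.pi F G).sat v ∨ (t.clause.restrict F).sat v := by
  induction t with
  | leaf C =>
    by_cases hC : C ∈ F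
    · exact .inr (PClause.sat_restrict_of_mem hC hv)
    · exact .inl (by simp [DT.pi, hC, PFml.sat])
  | res A t₁ t₂ ih₁ ih₂ =>
    rw [sat_pi_res]
    split_ifs with hF hG
    · have := sat_restrict_res_or_of_cases (A := A) ih₁ ih₂
      tauto
    · exact sat_restrict_res_or_of_not_occB (fColored_eq_true_iff.mp hG).2 ih₁ ih₂
    · exact sat_restrict_res_or_of_cases ih₁ ih₂

lemma not_sat_pi_or_sat_restrict_right {v : ℕ → Prop} (hv : PCF.sat v G) {t : DT}
    (ht : t.wf (F ++ G)) : ¬ (t.pi F G).sat v ∨ (t.clause.restrict G).sat v := by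
  induction t with
  | leaf C =>
    by_cases hC : C ∈ F
    · exact .inl (by simp [DT.pi, hC, PFml.sat])
    · have hCG : C ∈ G := (List.mem_append.mp ht).resolve_left hC
      exact .inr (PClause.sat_restrict_of_mem hCG hv)
  | res A t₁ t₂ ih₁ ih₂ =>
    have ih₁ := ih₁ ht.2.2.1
    have ih₂ := ih₂ ht.2.2.2
    rw [sat_pi_res]
    split_ifs with hF hG
    · have := sat_restrict_res_or_of_not_occB (fColored_eq_true_iff.mp hF).2 ih₁ ih₂
      tauto
    · have := sat_restrict_res_or_of_cases (A := A) ih₁ ih₂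
      tauto
    · have := sat_restrict_res_or_of_cases (A := A) ih₁ ih₂
      tauto

lemma atoms_pi_subset {t : DT} (ht : t.wf (F ++ G)) :
    (t.pi F G).atoms ⊆ {A | occB A F = true} ∩ {A | occB A G = true} := by
  induction t with
  | leaf C => by_cases hC : C ∈ F <;> simp [DT.pi, hC, PFml.atoms]
  | res A t₁ t₂ ih₁ ih₂ =>
    have ih₁ := ih₁ ht.2.2.1
    have ih₂ := ih₂ ht.2.2.2
    rw [DT.pi]
    split_ifs with hF hG
    · exact Set.union_subset ih₁ ih₂
    · exact Set.union_subset ih₁ ih₂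
    · have hA := occB_left_and_right_of_not_fColored (occB_of_mem_clause ht.2.2.1 ht.1) hF hG
      have hAtom : (PFml.atom A).atoms ⊆ {A | occB A F = true} ∩ {A | occB A G = true} := by
        simpa [PFml.atoms] using hA
      simp only [PFml.atoms]
      exact Set.union_subset (Set.union_subset ih₁ hAtom) (Set.union_subset hAtom ih₂)

end DT

/-- Correctness of Huang's partial interpolants. If `F` and `G` are
propositional clausal formulas with no common clause such that F ∧ G is unsatisfiable
and `t` is a deduction tree for F ∧ G (with root clause □), then pi(root) is a Craig
interpolant of F and ¬G: F ⊨ pi ⊨ ¬G and every atom of pi occurs in both F and G. -/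
theorem statement3 (F G : PCF)
    (hnodup : ∀ C ∈ F ++ G, C.Nodup)
    (hnocommon : ∀ C : PClause, ¬ (C ∈ F ∧ C ∈ G))
    (hunsat : ∀ v : ℕ → Prop, ¬ (PCF.sat v F ∧ PCF.sat v G))
    (t : DT) (hwf : t.wf (F ++ G)) (hroot : t.clause = []) :
    (∀ v : ℕ → Prop, PCF.sat v F → (t.pi F G).sat v) ∧
    (∀ v : ℕ → Prop, (t.pi F G).sat v → ¬ PCF.sat v G) ∧
    (t.pi F G).atoms ⊆ {A | occB A F = true} ∩ {A | occB A G = true} := by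
  have hempty : ∀ (v : ℕ → Prop) (S : PCF), ¬ (t.clause.restrict S).sat v := by
    simp [hroot, PClause.restrict, PClause.sat]
  refine ⟨fun v hv => ?_, fun v hpi hv => ?_, DT.atoms_pi_subset hwf⟩
  · exact (DT.sat_pi_or_sat_restrict_left hv t).resolve_right (hempty v F)
  · exact (DT.not_sat_pi_or_sat_restrict_right hv hwf).elim (· hpi) (hempty v G)

end CTIFProp
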